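/- arXiv:2205.01722 — 5 statements merged into one kernel-verified Lean document; each statement's English description precedes it below -/
import Mathlib

section
/- Let x_1 ≥ x_2 ≥ ... ≥ x_n be integers, and let q ≥ 1 be an integer such that some subset S of indices of size 2q has all x_i (for i in S) equal. If we increase x_i by 1 for exactly q indices i in S and decrease x_i by 1 for the remaining q indices in S, then the potential Ψ = n·Σ_i |x_i| + Σ_{i<j} |x_i - x_j| increases by at least 2q². -/
/-! On `S` the move replaces `2q` copies of a common value `c` by `q` copies of `c + 1` and `q`
copies of `c - 1`. Every term of `Ψ` that involves at most one index of `S` is, as a function of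
that coordinate, of the form `|· - t|`, and `2 |a| ≤ |a + 1| + |a - 1|` shows that its sum over `S`
cannot decrease. The pairs inside `S` were all at distance `0`, and afterwards the `q²` pairs
between `T` and `S \ T` are at distance `2`. -/

open Finset

variable {ι : Type*}

theorem two_mul_sum_sum_ite_lt {R : Type*} [NonAssocSemiring R] [Fintype ι] [LinearOrder ι]
    (f : ι → ι → R) (hf : ∀ i j, f i j = f j i) (hdiag : ∀ i, f i i = 0) :
    2 * ∑ i, ∑ j, (if i < j then f i j else 0) = ∑ i, ∑ j, f i j := by
  have hsplit : ∀ i j, f i j = (if i < j then f i j else 0) + (if j < i then f j i else 0) := by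
    intro i j
    rcases lt_trichotomy i j with h | rfl | h
    · simp [h, h.not_gt]
    · simp [hdiag]
    · simp [h, h.not_gt, hf i j]
  have hswap : ∑ i, ∑ j, (if j < i then f j i else 0) = ∑ i, ∑ j, (if i < j then f i j else 0) :=
    sum_comm
  calc 2 * ∑ i, ∑ j, (if i < j then f i j else 0)
      = ∑ i, ∑ j, ((if i < j then f i j else 0) + (if j < i then f j i else 0)) := by
        rw [sum_congr rfl fun i _ => sum_add_distrib, sum_add_distrib, hswap, two_mul]
    _ = ∑ i, ∑ j, f i j := sum_congr rfl fun i _ => sum_congr rfl fun j _ => (hsplit i j).symm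

theorem abs_add_abs_le_abs_add_one_add_abs_sub_one (a : ℤ) : |a| + |a| ≤ |a + 1| + |a - 1| := by
  calc |a| + |a| = |(a + 1) + (a - 1)| := by
        rw [add_add_sub_cancel, ← two_mul, ← two_mul, abs_mul, abs_two]
    _ ≤ |a + 1| + |a - 1| := abs_add_le _ _

theorem sum_sum_split_compl {M : Type*} [AddCommMonoid M] [Fintype ι] [DecidableEq ι]
    (S : Finset ι) (F : ι → ι → M) :
    ∑ i, ∑ j, F i j = ∑ i ∈ S, ∑ j ∈ S, F i j + ∑ i ∈ S, ∑ j ∈ Sᶜ, F i j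
      + ∑ i ∈ Sᶜ, ∑ j ∈ S, F i j + ∑ i ∈ Sᶜ, ∑ j ∈ Sᶜ, F i j := by
  simp only [← sum_add_sum_compl S, sum_add_distrib]
  abel

section Spread

variable [DecidableEq ι]

def spread (S T : Finset ι) (x : ι → ℤ) (i : ι) : ℤ :=
  if i ∈ T then x i + 1 else if i ∈ S then x i - 1 else x i

variable {S T : Finset ι} {x : ι → ℤ} {c : ℤ}

theorem spread_of_notMem (hTS : T ⊆ S) {i : ι} (hi : i ∉ S) : spread S T x i = x i := by
  rw [spread, if_neg (fun h => hi (hTS h)), if_neg hi]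

theorem sum_comp_spread {M : Type*} [AddCommMonoid M] (hTS : T ⊆ S) (hc : ∀ i ∈ S, x i = c)
    (g : ℤ → M) :
    ∑ i ∈ S, g (spread S T x i) = #(S \ T) • g (c - 1) + #T • g (c + 1) := by
  rw [← sum_sdiff hTS]
  congr 1
  · rw [← sum_const]
    refine sum_congr rfl fun i hi => ?_
    rw [mem_sdiff] at hi
    rw [spread, if_neg hi.2, if_pos hi.1, hc i hi.1]
  · rw [← sum_const]
    exact sum_congr rfl fun i hi => by rw [spread, if_pos hi, hc i (hTS hi)]

theorem sum_abs_sub_le_sum_abs_sub_spread (hTS : T ⊆ S) (hcard : #(S \ T) = #T)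
    (hc : ∀ i ∈ S, x i = c) (t : ℤ) :
    ∑ i ∈ S, |x i - t| ≤ ∑ i ∈ S, |spread S T x i - t| := by
  have hS : #S = #T + #T := by rw [← card_sdiff_add_card_eq_card hTS, hcard]
  rw [sum_comp_spread hTS hc (fun u => |u - t|), sum_congr rfl fun i hi => by rw [hc i hi],
    sum_const, hS, hcard, add_nsmul, ← nsmul_add, ← nsmul_add]
  refine nsmul_le_nsmul_right ?_ _
  have := abs_add_abs_le_abs_add_one_add_abs_sub_one (c - t)
  ring_nf at this ⊢
  linarith

theorem sum_sum_abs_sub_spread (hTS : T ⊆ S) (hc : ∀ i ∈ S, x i = c) :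
    ∑ i ∈ S, ∑ j ∈ S, |spread S T x i - spread S T x j| = 4 * #T * #(S \ T) := by
  rw [sum_comp_spread hTS hc (fun v => ∑ j ∈ S, |v - spread S T x j|),
    sum_comp_spread hTS hc (fun w => |c - 1 - w|), sum_comp_spread hTS hc (fun w => |c + 1 - w|)]
  rw [show c - 1 - (c + 1) = -2 by ring, show c + 1 - (c - 1) = 2 by ring]
  simp only [nsmul_eq_mul, sub_self, abs_zero, abs_neg, abs_two]
  ring

variable [Fintype ι]

theorem sum_abs_le_sum_abs_spread (hTS : T ⊆ S) (hcard : #(S \ T) = #T)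
    (hc : ∀ i ∈ S, x i = c) : ∑ i, |x i| ≤ ∑ i, |spread S T x i| := by
  rw [← sum_add_sum_compl S, ← sum_add_sum_compl S]
  refine add_le_add ?_ (sum_congr rfl fun i hi => ?_).le
  · simpa only [sub_zero] using sum_abs_sub_le_sum_abs_sub_spread hTS hcard hc 0
  · rw [spread_of_notMem hTS (mem_compl.mp hi)]

theorem sum_sum_abs_sub_add_le_sum_sum_abs_sub_spread (hTS : T ⊆ S) (hcard : #(S \ T) = #T)
    (hc : ∀ i ∈ S, x i = c) :
    ∑ i, ∑ j, |x i - x j| + 4 * #T * #(S \ T) ≤ ∑ i, ∑ j, |spread S T x i - spread S T x j| := by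
  have hfix : ∀ i ∈ Sᶜ, spread S T x i = x i := fun i hi => spread_of_notMem hTS (mem_compl.mp hi)
  have hinside : ∑ i ∈ S, ∑ j ∈ S, |x i - x j| = 0 :=
    sum_eq_zero fun i hi => sum_eq_zero fun j hj => by rw [hc i hi, hc j hj, sub_self, abs_zero]
  have hleft : ∑ i ∈ S, ∑ j ∈ Sᶜ, |x i - x j|
      ≤ ∑ i ∈ S, ∑ j ∈ Sᶜ, |spread S T x i - spread S T x j| := by
    rw [sum_comm, sum_comm (s := S)]
    refine sum_le_sum fun j hj => ?_
    rw [hfix j hj]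
    exact sum_abs_sub_le_sum_abs_sub_spread hTS hcard hc (x j)
  have hright : ∑ i ∈ Sᶜ, ∑ j ∈ S, |x i - x j|
      ≤ ∑ i ∈ Sᶜ, ∑ j ∈ S, |spread S T x i - spread S T x j| := by
    refine sum_le_sum fun i hi => ?_
    simp only [hfix i hi, abs_sub_comm (x i)]
    exact sum_abs_sub_le_sum_abs_sub_spread hTS hcard hc (x i)
  have houtside : ∑ i ∈ Sᶜ, ∑ j ∈ Sᶜ, |spread S T x i - spread S T x j|
      = ∑ i ∈ Sᶜ, ∑ j ∈ Sᶜ, |x i - x j| :=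
    sum_congr rfl fun i hi => sum_congr rfl fun j hj => by rw [hfix i hi, hfix j hj]
  rw [sum_sum_split_compl S, sum_sum_split_compl S, hinside, houtside,
    sum_sum_abs_sub_spread hTS hc]
  linarith

end Spread

theorem stmt1_general (n q : ℕ) (x : Fin n → ℤ)
    (S : Finset (Fin n)) (hS : S.card = 2 * q)
    (heq : ∀ i ∈ S, ∀ j ∈ S, x i = x j)
    (T : Finset (Fin n)) (hTS : T ⊆ S) (hT : T.card = q)
    (x' : Fin n → ℤ)
    (hx' : ∀ i, x' i = if i ∈ T then x i + 1 else if i ∈ S then x i - 1 else x i) :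
    (n : ℤ) * ∑ i, |x i| + (∑ i, ∑ j, if i < j then |x i - x j| else 0) + 2 * q ^ 2
      ≤ (n : ℤ) * ∑ i, |x' i| + (∑ i, ∑ j, if i < j then |x' i - x' j| else 0) := by
  obtain ⟨c, hc⟩ : ∃ c, ∀ i ∈ S, x i = c := S.eq_empty_or_nonempty.elim
    (fun h => ⟨0, by simp [h]⟩) fun ⟨i₀, hi₀⟩ => ⟨x i₀, fun i hi => heq i hi i₀ hi₀⟩
  obtain rfl : x' = spread S T x := funext hx'
  have hcard : #(S \ T) = #T := by rw [card_sdiff_of_subset hTS]; omega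
  have hpairs := sum_sum_abs_sub_add_le_sum_sum_abs_sub_spread hTS hcard hc
  have habs := mul_le_mul_of_nonneg_left (sum_abs_le_sum_abs_spread hTS hcard hc) n.cast_nonneg
  rw [← two_mul_sum_sum_ite_lt _ (fun i j => abs_sub_comm _ _) (by simp),
    ← two_mul_sum_sum_ite_lt _ (fun i j => abs_sub_comm _ _) (by simp), hcard, hT] at hpairs
  linarith

/-- the same move increases Ψ = n·Σ|x_i| + Σ_{i<j}|x_i - x_j| by at least 2q². -/
theorem stmt1 (n q : ℕ) (hq : 1 ≤ q) (x : Fin n → ℤ) (hx : Antitone x)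
    (S : Finset (Fin n)) (hS : S.card = 2 * q)
    (heq : ∀ i ∈ S, ∀ j ∈ S, x i = x j)
    (T : Finset (Fin n)) (hTS : T ⊆ S) (hT : T.card = q)
    (x' : Fin n → ℤ)
    (hx' : ∀ i, x' i = if i ∈ T then x i + 1 else if i ∈ S then x i - 1 else x i) :
    (n : ℤ) * ∑ i, |x i| + (∑ i, ∑ j, if i < j then |x i - x j| else 0) + 2 * q ^ 2
      ≤ (n : ℤ) * ∑ i, |x' i| + (∑ i, ∑ j, if i < j then |x' i - x' j| else 0) :=
  stmt1_general n q x S hS heq T hTS hT x' hx'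
end

section
/- Let x_1 ≥ x_2 ≥ ... ≥ x_n ≥ 0 be integers such that some subset S of indices of size q has x_i = 0 for all i in S. If we increase x_i by 1 for all i in S, then the potential Ψ = n·Σ_i |x_i| + Σ_{i<j} |x_i - x_j| increases by at least q². -/
/-!
Raising the entries in `S` from `0` to `1` increases `∑ |xᵢ|` by exactly `q`, so the first term of
`Ψ` grows by `n q`. By the triangle inequality each `|xᵢ - xⱼ|` drops by at most `|δᵢ - δⱼ|`, where
`δ` is the indicator of `S`, and `∑_{i<j} |δᵢ - δⱼ| = q (n - q)` counts the pairs split by `S`.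
Hence `Ψ` grows by at least `n q - q (n - q) = q²`.
-/

open Finset

section Pairwise

variable {ι : Type*} [Fintype ι] [LinearOrder ι]

theorem two_nsmul_sum_sum_ite_lt {M : Type*} [AddCommMonoid M] (f : ι → ι → M)
    (hsymm : ∀ i j, f i j = f j i) (hdiag : ∀ i, f i i = 0) :
    2 • ∑ i, ∑ j, (if i < j then f i j else 0) = ∑ i, ∑ j, f i j := by
  have hsplit : ∀ i j, f i j = (if i < j then f i j else 0) + (if j < i then f j i else 0) := by
    intro i j
    rcases lt_trichotomy i j with h | rfl | h
    · simp [h, h.not_gt]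
    · simp [hdiag]
    · simp [h, h.not_gt, hsymm i j]
  calc 2 • ∑ i, ∑ j, (if i < j then f i j else 0)
      = ∑ i, ∑ j, ((if i < j then f i j else 0) + (if j < i then f j i else 0)) := by
        rw [two_nsmul]; simp only [sum_add_distrib]; congr 1; exact sum_comm
    _ = ∑ i, ∑ j, f i j := by simp only [← hsplit]

/-- The second summand of the potential `Ψ`. -/
def pairwiseDist {α : Type*} [AddCommGroup α] [LinearOrder α] (x : ι → α) : α :=
  ∑ i, ∑ j, if i < j then |x i - x j| else 0

theorem pairwiseDist_le_add {α : Type*} [AddCommGroup α] [LinearOrder α] [IsOrderedAddMonoid α]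
    (x d : ι → α) : pairwiseDist x ≤ pairwiseDist (x + d) + pairwiseDist d := by
  unfold pairwiseDist
  simp only [← sum_add_distrib]
  refine sum_le_sum fun i _ => sum_le_sum fun j _ => ?_
  split_ifs
  · calc |x i - x j| = |((x + d) i - (x + d) j) - (d i - d j)| := by
          simp only [Pi.add_apply]; congr 1; abel
      _ ≤ |(x + d) i - (x + d) j| + |d i - d j| := abs_sub _ _
  · simp

theorem pairwiseDist_indicator (S : Finset ι) :
    pairwiseDist (fun i => if i ∈ S then (1 : ℤ) else 0) = #S * (Fintype.card ι - #S) := by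
  set δ : ι → ℤ := fun i => if i ∈ S then 1 else 0
  have habs : ∀ i j, |δ i - δ j| = δ i + δ j - 2 * (δ i * δ j) := by
    intro i j; by_cases hi : i ∈ S <;> by_cases hj : j ∈ S <;> simp [δ, hi, hj]
  have hsum : ∑ i, δ i = #S := by simp [δ]
  have htwice : 2 • pairwiseDist δ = 2 * (#S * (Fintype.card ι - #S)) := by
    rw [pairwiseDist, two_nsmul_sum_sum_ite_lt _ (fun i j => abs_sub_comm _ _) (by simp)]
    simp only [habs, sum_sub_distrib, sum_add_distrib, ← mul_sum, ← sum_mul, sum_const, card_univ,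
      nsmul_eq_mul, hsum]
    ring
  simpa using htwice

end Pairwise

theorem sum_abs_add_indicator {ι : Type*} [Fintype ι] [DecidableEq ι] (x : ι → ℤ) (S : Finset ι)
    (hzero : ∀ i ∈ S, x i = 0) :
    ∑ i, |x i + if i ∈ S then 1 else 0| = ∑ i, |x i| + #S := by
  have h : ∀ i, |x i + if i ∈ S then 1 else 0| = |x i| + if i ∈ S then 1 else 0 := by
    intro i; by_cases hi : i ∈ S <;> simp [hi, hzero]
  simp [h, sum_add_distrib]

theorem stmt2_general (n q : ℕ) (x : Fin n → ℤ)
    (S : Finset (Fin n)) (hS : S.card = q) (hzero : ∀ i ∈ S, x i = 0)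
    (x' : Fin n → ℤ) (hx' : ∀ i, x' i = if i ∈ S then x i + 1 else x i) :
    (n : ℤ) * ∑ i, |x i| + (∑ i, ∑ j, if i < j then |x i - x j| else 0) + q ^ 2
      ≤ (n : ℤ) * ∑ i, |x' i| + (∑ i, ∑ j, if i < j then |x' i - x' j| else 0) := by
  subst hS
  set δ : Fin n → ℤ := fun i => if i ∈ S then 1 else 0
  have hx'_eq : x' = x + δ := by
    funext i; rw [hx']; by_cases hi : i ∈ S <;> simp [δ, hi]
  have habs : ∑ i, |x' i| = ∑ i, |x i| + #S := by
    rw [hx'_eq]; exact sum_abs_add_indicator x S hzero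
  have hpair : pairwiseDist x ≤ pairwiseDist x' + #S * (n - #S) := by
    simpa [hx'_eq, δ, pairwiseDist_indicator] using pairwiseDist_le_add x δ
  change _ + pairwiseDist x + _ ≤ _ + pairwiseDist x'
  rw [habs]
  linear_combination hpair

/-- raising q zero-cups to 1 increases Ψ by at least q². -/
theorem stmt2 (n q : ℕ) (x : Fin n → ℤ) (hx : Antitone x) (hnn : ∀ i, 0 ≤ x i)
    (S : Finset (Fin n)) (hS : S.card = q) (hzero : ∀ i ∈ S, x i = 0)
    (x' : Fin n → ℤ) (hx' : ∀ i, x' i = if i ∈ S then x i + 1 else x i) :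
    (n : ℤ) * ∑ i, |x i| + (∑ i, ∑ j, if i < j then |x i - x j| else 0) + q ^ 2
      ≤ (n : ℤ) * ∑ i, |x' i| + (∑ i, ∑ j, if i < j then |x' i - x' j| else 0) :=
  stmt2_general n q x S hS hzero x' hx'
end

section
/- In the stone-variant cup game, if at any time there exists a cup of fill k for some integer k ≥ 3, then there must exist a cup of fill either k-1 or k-2. -/
/-!
Call a set of levels `S ⊆ ℤ` lower supported if every positive level in `S` has a level of `S`
one or two below it. The levels occupied by the all-zero state form such a set, and a round played
at level `m` keeps the property: it can only vacate `m` and only occupy `m ± 1`, and it always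
occupies both `m - 1` and `m + 1`.
-/

/-- One round of the stone-variant cup game: some 2q cups of equal fill `k` are split,
q going up to k+1 and q going down to k-1; all other cups are unchanged. -/
def StoneStep {n : ℕ} (x y : Fin n → ℤ) : Prop :=
  ∃ (k : ℤ) (A B : Finset (Fin n)), Disjoint A B ∧ A.card = B.card ∧ 1 ≤ A.card ∧
    (∀ i ∈ A ∪ B, x i = k) ∧ (∀ i ∈ A, y i = x i + 1) ∧ (∀ i ∈ B, y i = x i - 1) ∧
    (∀ i, i ∉ A ∪ B → y i = x i)

def LowerSupported (S : Set ℤ) : Prop :=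
  ∀ k ∈ S, 1 ≤ k → k - 1 ∈ S ∨ k - 2 ∈ S

theorem LowerSupported.of_split {S T : Set ℤ} {m : ℤ} (hS : LowerSupported S) (hm : m ∈ S)
    (hdown : m - 1 ∈ T) (hup : m + 1 ∈ T) (hkeep : S \ {m} ⊆ T)
    (hsub : T ⊆ insert (m - 1) (insert (m + 1) S)) : LowerSupported T := by
  have keep : ∀ l ∈ S, l ≠ m → l ∈ T := fun l hl hne => hkeep ⟨hl, hne⟩
  intro k hk hk1
  by_cases hkm : k = m
  · exact .inl (hkm ▸ hdown)
  by_cases hkm' : k = m + 1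
  · exact .inr (by convert hdown using 1; omega)
  rcases hsub hk with rfl | rfl | hkS
  · -- the new level `m - 1` is supported through the old level `m`
    rcases hS m hm (by omega) with h1 | h2
    · rcases hS (m - 1) h1 (by omega) with h | h
      · exact .inl (keep _ h (by omega))
      · exact .inr (keep _ h (by omega))
    · exact .inl (keep _ (by convert h2 using 1; omega) (by omega))
  · exact absurd rfl hkm'
  · rcases hS k hkS hk1 with h1 | h2
    · exact .inl (keep _ h1 (by omega))
    · by_cases h : k - 2 = m
      · exact .inl (by convert hup using 1; omega)
      · exact .inr (keep _ h2 h)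

theorem StoneStep.exists_split_level {n : ℕ} {x y : Fin n → ℤ} (h : StoneStep x y) :
    ∃ m, m ∈ Set.range x ∧ m - 1 ∈ Set.range y ∧ m + 1 ∈ Set.range y ∧
      Set.range x \ {m} ⊆ Set.range y ∧
      Set.range y ⊆ insert (m - 1) (insert (m + 1) (Set.range x)) := by
  obtain ⟨m, A, B, -, hcard, hA, hval, hup, hdown, hout⟩ := h
  obtain ⟨a, ha⟩ := Finset.card_pos.mp hA
  obtain ⟨b, hb⟩ := Finset.card_pos.mp (hcard ▸ hA)
  have hxa : x a = m := hval a (Finset.mem_union_left _ ha)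
  have hxb : x b = m := hval b (Finset.mem_union_right _ hb)
  refine ⟨m, ⟨a, hxa⟩, ⟨b, by rw [hdown b hb, hxb]⟩, ⟨a, by rw [hup a ha, hxa]⟩, ?_, ?_⟩
  · rintro _ ⟨⟨i, rfl⟩, hne⟩
    exact ⟨i, hout i fun hi => hne (hval i hi)⟩
  · rintro _ ⟨i, rfl⟩
    by_cases hiA : i ∈ A
    · exact .inr (.inl (by rw [hup i hiA, hval i (Finset.mem_union_left _ hiA)]))
    by_cases hiB : i ∈ B
    · exact .inl (by rw [hdown i hiB, hval i (Finset.mem_union_right _ hiB)])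
    exact .inr (.inr ⟨i, (hout i (by simp [hiA, hiB])).symm⟩)

theorem lowerSupported_range_of_reachable {n : ℕ} {x : Fin n → ℤ}
    (hreach : Relation.ReflTransGen StoneStep (fun _ => (0 : ℤ)) x) :
    LowerSupported (Set.range x) := by
  induction hreach with
  | refl => rintro k ⟨i, rfl⟩ hk; simp at hk
  | tail _ hstep ih =>
    obtain ⟨m, hm, hdown, hup, hkeep, hsub⟩ := hstep.exists_split_level
    exact ih.of_split hm hdown hup hkeep hsub

/-- in any state of the stone game reachable from the all-zero state,
if some cup has fill k ≥ 3, then some cup has fill k-1 or k-2. -/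
theorem stmt7 (n : ℕ) (x : Fin n → ℤ)
    (hreach : Relation.ReflTransGen StoneStep (fun _ => (0 : ℤ)) x)
    (k : ℤ) (hk : 3 ≤ k) (hex : ∃ i, x i = k) :
    ∃ j, x j = k - 1 ∨ x j = k - 2 := by
  obtain ⟨i, hi⟩ := hex
  rcases lowerSupported_range_of_reachable hreach k ⟨i, hi⟩ (by omega) with ⟨j, hj⟩ | ⟨j, hj⟩
  · exact ⟨j, .inl hj⟩
  · exact ⟨j, .inr hj⟩
end

section
/- Suppose that x_1,...,x_n and y_1,...,y_n are sorted (non-increasing) integer sequences with x_i ≥ y_i for all i, and suppose one round of the stone-variant cup game transforms {y_i} into a sequence {y_i'}. Then there exists a (possibly trivial) round of the stone-variant cup game transforming {x_i} into a sequence {x_i'} such that, after sorting, x_i' ≥ y_i' for all i. -/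
open Finset

section Counting

variable {ι : Type*} [Fintype ι]

def countGE (u : ι → ℤ) (c : ℤ) : ℕ :=
  #{i | c ≤ u i}

theorem countGE_comp_equiv {κ : Type*} [Fintype κ] (u : ι → ℤ) (e : κ ≃ ι) (c : ℤ) :
    countGE (u ∘ e) c = countGE u c :=
  Finset.card_equiv e (by simp)

theorem countGE_mono {u v : ι → ℤ} (h : ∀ i, v i ≤ u i) (c : ℤ) : countGE v c ≤ countGE u c :=
  Finset.card_le_card fun i hi => by
    simp only [mem_filter, mem_univ, true_and] at hi ⊢
    exact hi.trans (h i)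

theorem card_eq_add_countGE_succ [DecidableEq ι] (u : ι → ℤ) (k : ℤ) :
    #{i | u i = k} + countGE u (k + 1) = countGE u k := by
  rw [countGE, countGE, ← card_union_of_disjoint (disjoint_filter.2 fun i _ h => by omega)]
  congr 1
  ext i
  simp only [mem_union, mem_filter, mem_univ, true_and]
  omega

end Counting

theorem le_of_countGE_le {n : ℕ} {u v : Fin n → ℤ} (hu : Antitone u) (hv : Antitone v)
    (h : ∀ c, countGE v c ≤ countGE u c) (i : Fin n) : v i ≤ u i := by
  by_contra! hlt
  have hv_count : (i : ℕ) + 1 ≤ countGE v (v i) := by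
    rw [← Fin.card_Iic i]
    exact card_le_card fun j hj => by simpa using hv (mem_Iic.1 hj)
  have hu_count : countGE u (v i) ≤ i := by
    rw [← Fin.card_Iio i]
    refine card_le_card fun j hj => mem_Iio.2 (lt_of_not_ge fun hij => ?_)
    simp only [mem_filter, mem_univ, true_and] at hj
    exact (hj.trans (hu hij)).not_gt hlt
  have := h (v i)
  omega

/-- A round at level `k`, possibly trivial (`A = B = ∅`). -/
structure IsRound {ι : Type*} [DecidableEq ι] (k : ℤ) (A B : Finset ι) (u u' : ι → ℤ) :
    Prop where
  disjoint : Disjoint A B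
  card_eq : #A = #B
  eq_level : ∀ i ∈ A ∪ B, u i = k
  up : ∀ i ∈ A, u' i = u i + 1
  down : ∀ i ∈ B, u' i = u i - 1
  of_notMem : ∀ i, i ∉ A ∪ B → u' i = u i

namespace IsRound

variable {ι : Type*} [DecidableEq ι] {k : ℤ} {A B : Finset ι} {u u' : ι → ℤ}

theorem trichotomy (h : IsRound k A B u u') (i : ι) :
    (i ∈ A ∧ i ∉ B ∧ u i = k ∧ u' i = k + 1) ∨ (i ∉ A ∧ i ∈ B ∧ u i = k ∧ u' i = k - 1) ∨
      (i ∉ A ∧ i ∉ B ∧ u' i = u i) := by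
  by_cases hA : i ∈ A
  · have := h.eq_level i (mem_union_left _ hA)
    exact .inl ⟨hA, disjoint_left.1 h.disjoint hA, this, by rw [h.up i hA, this]⟩
  by_cases hB : i ∈ B
  · have := h.eq_level i (mem_union_right _ hB)
    exact .inr (.inl ⟨hA, hB, this, by rw [h.down i hB, this]⟩)
  exact .inr (.inr ⟨hA, hB, h.of_notMem i (by simp [hA, hB])⟩)

variable [Fintype ι]

theorem card_add_card_le (h : IsRound k A B u u') : #A + #B ≤ #{i | u i = k} := by
  rw [← card_union_of_disjoint h.disjoint]
  exact card_le_card fun i hi => by simpa using h.eq_level i hi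

theorem countGE_succ (h : IsRound k A B u u') :
    countGE u' (k + 1) = countGE u (k + 1) + #A := by
  have hdisj : Disjoint ({i | k + 1 ≤ u i} : Finset ι) A :=
    disjoint_left.2 fun i hi hiA => by
      have := h.eq_level i (mem_union_left _ hiA)
      simp only [mem_filter, mem_univ, true_and] at hi
      omega
  rw [countGE, countGE, ← card_union_of_disjoint hdisj]
  congr 1
  ext i
  simp only [mem_union, mem_filter, mem_univ, true_and]
  rcases h.trichotomy i with ⟨hA, -, -, hu'⟩ | ⟨hA, -, hu, hu'⟩ | ⟨hA, -, hu'⟩ <;>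
    simp [hA] <;> omega

theorem countGE_level (h : IsRound k A B u u') : countGE u' k + #B = countGE u k := by
  have hdisj : Disjoint ({i | k ≤ u' i} : Finset ι) B :=
    disjoint_left.2 fun i hi hiB => by
      have := h.down i hiB
      have := h.eq_level i (mem_union_right _ hiB)
      simp only [mem_filter, mem_univ, true_and] at hi
      omega
  rw [countGE, countGE, ← card_union_of_disjoint hdisj]
  congr 1
  ext i
  simp only [mem_union, mem_filter, mem_univ, true_and]
  rcases h.trichotomy i with ⟨-, hB, hu, hu'⟩ | ⟨-, hB, hu, -⟩ | ⟨-, hB, hu'⟩ <;>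
    simp [hB] <;> omega

theorem countGE_of_ne (h : IsRound k A B u u') {c : ℤ} (hk : c ≠ k) (hk1 : c ≠ k + 1) :
    countGE u' c = countGE u c := by
  rw [countGE, countGE]
  congr 1
  ext i
  simp only [mem_filter, mem_univ, true_and]
  rcases h.trichotomy i with ⟨-, -, hu, hu'⟩ | ⟨-, -, hu, hu'⟩ | ⟨-, -, hu'⟩ <;> omega

end IsRound

theorem exists_isRound {ι : Type*} [Fintype ι] [DecidableEq ι] (u : ι → ℤ) {k : ℤ} {p : ℕ}
    (hp : 2 * p ≤ #{i | u i = k}) : ∃ A B u', IsRound k A B u u' ∧ #A = p := by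
  set S : Finset ι := {i | u i = k}
  obtain ⟨A, hAS, hA⟩ := exists_subset_card_eq (s := S) (n := p) (by omega)
  obtain ⟨B, hBS, hB⟩ := exists_subset_card_eq (s := S \ A) (n := p)
    (by rw [card_sdiff_of_subset hAS]; omega)
  have hdisj : Disjoint A B := disjoint_right.2 fun i hi => (mem_sdiff.1 (hBS hi)).2
  refine ⟨A, B, fun i => if i ∈ A then u i + 1 else if i ∈ B then u i - 1 else u i,
    ⟨hdisj, hA.trans hB.symm, fun i hi => ?_, fun i hi => by simp [hi],
      fun i hi => by simp [hi, disjoint_right.1 hdisj hi], fun i hi => ?_⟩, hA⟩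
  · rcases mem_union.1 hi with hi | hi
    · simpa [S] using hAS hi
    · simpa [S] using (mem_sdiff.1 (hBS hi)).1
  · simp only [mem_union, not_or] at hi
    simp [hi.1, hi.2]

theorem IsRound.eq_or_stoneStep {n : ℕ} {k : ℤ} {A B : Finset (Fin n)} {u u' : Fin n → ℤ}
    (h : IsRound k A B u u') : u' = u ∨ StoneStep u u' := by
  rcases Nat.eq_zero_or_pos #A with hA | hA
  · have hB : B = ∅ := card_eq_zero.1 (h.card_eq ▸ hA)
    exact .inl (funext fun i => h.of_notMem i (by simp [card_eq_zero.1 hA, hB]))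
  · exact .inr ⟨k, A, B, h.disjoint, h.card_eq, hA, h.eq_level, h.up, h.down, h.of_notMem⟩

theorem IsRound.exists_isRound_countGE_le {ι : Type*} [Fintype ι] [DecidableEq ι] {k : ℤ}
    {A B : Finset ι} {x y y' : ι → ℤ} (hy : IsRound k A B y y')
    (hxy : ∀ c, countGE y c ≤ countGE x c) :
    ∃ A' B' x', IsRound k A' B' x x' ∧ ∀ c, countGE y' c ≤ countGE x' c := by
  -- truncated subtraction: `p = 0` when `x` already has enough cups above `k`
  set p := countGE y (k + 1) + #A - countGE x (k + 1)
  have hy_level := card_eq_add_countGE_succ y k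
  have hx_level := card_eq_add_countGE_succ x k
  have hyk := hxy k
  have hyk1 := hxy (k + 1)
  have hAB := hy.card_add_card_le
  have hBA := hy.card_eq
  obtain ⟨A', B', x', hx, hA'⟩ := exists_isRound x (k := k) (p := p) (by omega)
  refine ⟨A', B', x', hx, fun c => ?_⟩
  have hx_up := hx.countGE_succ
  have hx_down := hx.countGE_level
  have hy_up := hy.countGE_succ
  have hy_down := hy.countGE_level
  have hB'A' := hx.card_eq
  by_cases hc1 : c = k + 1
  · subst hc1; omega
  by_cases hc : c = k
  · subst hc; omega
  rw [hx.countGE_of_ne hc hc1, hy.countGE_of_ne hc hc1]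
  exact hxy c

theorem stmt9_general (n : ℕ) (x y : Fin n → ℤ)
    (hdom : ∀ i, y i ≤ x i) (y' : Fin n → ℤ) (hstep : StoneStep y y') :
    ∃ x' : Fin n → ℤ, (x' = x ∨ StoneStep x x') ∧
      ∀ (σ τ : Equiv.Perm (Fin n)), Antitone (x' ∘ σ) → Antitone (y' ∘ τ) →
        ∀ i, y' (τ i) ≤ x' (σ i) := by
  obtain ⟨k, A, B, hd, hcard, -, hk, hA, hB, hout⟩ := hstep
  obtain ⟨A', B', x', hx, hcount⟩ :=
    IsRound.exists_isRound_countGE_le ⟨hd, hcard, hk, hA, hB, hout⟩ (countGE_mono hdom)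
  refine ⟨x', hx.eq_or_stoneStep, fun σ τ hσ hτ => le_of_countGE_le hσ hτ fun c => ?_⟩
  exact (countGE_comp_equiv y' τ c).trans_le
    ((hcount c).trans_eq (countGE_comp_equiv x' σ c).symm)

/-- domination is preserved under a round of the stone game: if sorted `x`
dominates sorted `y` and one stone-game round turns `y` into `y'`, then some (possibly
trivial) stone-game round turns `x` into `x'` with sorted `x'` dominating sorted `y'`. -/
theorem stmt9 (n : ℕ) (x y : Fin n → ℤ) (hx : Antitone x) (hy : Antitone y)
    (hdom : ∀ i, y i ≤ x i) (y' : Fin n → ℤ) (hstep : StoneStep y y') :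
    ∃ x' : Fin n → ℤ, (x' = x ∨ StoneStep x x') ∧
      ∀ (σ τ : Equiv.Perm (Fin n)), Antitone (x' ∘ σ) → Antitone (y' ∘ τ) →
        ∀ i, y' (τ i) ≤ x' (σ i) :=
  stmt9_general n x y hdom y' hstep
end

section
/- Let p ∈ ℕ and q_1,...,q_n ∈ [0,1] with Σ_j q_j = p. Then there exists a probability distribution over p-element subsets of {1,...,n} such that for each j, the probability that j belongs to the chosen subset is exactly q_j. -/
/-!
The inclusion vectors of fixed-size sampling designs form a convex set (the image of a convex set
under a linear map) that contains the indicator vector of every `p`-set, realised by a point mass.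
The hypersimplex `{q ∈ [0,1]ⁿ | ∑ q = p}` is compact and convex, so by Krein–Milman it is the
closure of the convex hull of its extreme points. An extreme point has no fractional coordinate:
integrality of `∑ q` would give a second one, and moving mass `±ε` between the two stays inside
the hypersimplex. Hence the extreme points are indicator vectors of `p`-sets, and the convex hull
of these finitely many points is already closed.
-/

open Finset

lemma eq_zero_of_add_mem_of_sub_mem_of_mem_extremePoints {𝕜 E : Type*} [Field 𝕜] [LinearOrder 𝕜]
    [IsStrictOrderedRing 𝕜] [AddCommGroup E] [Module 𝕜 E] {A : Set E} {x d : E}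
    (hx : x ∈ A.extremePoints 𝕜) (hadd : x + d ∈ A) (hsub : x - d ∈ A) : d = 0 := by
  have hmid : x ∈ openSegment 𝕜 (x + d) (x - d) :=
    ⟨1 / 2, 1 / 2, by norm_num, by norm_num, by norm_num, by module⟩
  simpa using hx.2 hadd hsub hmid

variable {ι : Type*} [Fintype ι]

def hypersimplex (ι : Type*) [Fintype ι] (p : ℕ) : Set (ι → ℝ) :=
  Set.univ.pi (fun _ => Set.Icc 0 1) ∩ {q | ∑ j, q j = p}

structure IsFixedSizeDesign (p : ℕ) (μ : Finset ι → ℝ) : Prop where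
  nonneg : ∀ S, 0 ≤ μ S
  sum_eq_one : ∑ S, μ S = 1
  card_eq : ∀ S, μ S ≠ 0 → S.card = p

def inclusionProb [DecidableEq ι] : (Finset ι → ℝ) →ₗ[ℝ] ι → ℝ where
  toFun μ j := ∑ S, if j ∈ S then μ S else 0
  map_add' μ ν := by ext j; simp [ite_add_zero, sum_add_distrib]
  map_smul' c μ := by ext j; simp [Finset.mul_sum]

namespace hypersimplex

variable {p : ℕ} {q : ι → ℝ}

lemma isCompact : IsCompact (hypersimplex ι p) :=
  (isCompact_univ_pi fun _ => isCompact_Icc).inter_right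
    (isClosed_eq (by fun_prop) continuous_const)

lemma convex : Convex ℝ (hypersimplex ι p) := by
  refine (convex_pi fun _ _ => convex_Icc 0 1).inter ?_
  intro x hx y hy a b _ _ hab
  simp only [Set.mem_ofPred_eq, Pi.add_apply, Pi.smul_apply, smul_eq_mul, sum_add_distrib,
    ← mul_sum] at hx hy ⊢
  rw [hx, hy, ← add_mul, hab, one_mul]

lemma exists_ne_mem_Ioo (hq : q ∈ hypersimplex ι p) {i : ι} (hi : q i ∈ Set.Ioo 0 1) :
    ∃ j ≠ i, q j ∈ Set.Ioo 0 1 := by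
  classical
  by_contra! h
  set N := #{j ∈ univ.erase i | q j = 1}
  have hrest : ∑ j ∈ univ.erase i, q j = N := by
    rw [← sum_boole]
    refine sum_congr rfl fun j hj => ?_
    obtain ⟨h0, h1⟩ := hq.1 j trivial
    rcases h0.eq_or_lt with h0 | h0
    · simp [← h0]
    · simp [(h1.lt_or_eq.resolve_left (h j (ne_of_mem_erase hj) ⟨h0, ·⟩)).symm]
  have hqi : q i = (p - N : ℤ) := by
    push_cast
    rw [← hq.2, ← add_sum_erase _ _ (mem_univ i), hrest]
    ring
  obtain ⟨hi0, hi1⟩ := hi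
  rw [hqi] at hi0 hi1
  have : (0 : ℤ) < p - N := by exact_mod_cast hi0
  have : (p - N : ℤ) < 1 := by exact_mod_cast hi1
  omega

lemma add_single_sub_single_mem [DecidableEq ι] (hq : q ∈ hypersimplex ι p) {j k : ι}
    (hjk : j ≠ k) {ε : ℝ} (hj : q j + ε ∈ Set.Icc 0 1) (hk : q k - ε ∈ Set.Icc 0 1) :
    q + (Pi.single j ε - Pi.single k ε) ∈ hypersimplex ι p := by
  refine ⟨fun l _ => ?_, ?_⟩
  · by_cases hlj : l = j
    · subst hlj; simpa [hjk] using hj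
    by_cases hlk : l = k
    · subst hlk; simpa [hlj, sub_eq_add_neg] using hk
    · simpa [hlj, hlk] using hq.1 l trivial
  · simpa [sum_add_distrib] using hq.2

lemma eq_zero_or_eq_one_of_mem_extremePoints (hq : q ∈ (hypersimplex ι p).extremePoints ℝ)
    (j : ι) : q j = 0 ∨ q j = 1 := by
  classical
  by_contra! hj
  obtain ⟨hj0, hj1⟩ := hq.1.1 j trivial
  have hj : q j ∈ Set.Ioo 0 1 := ⟨hj0.lt_of_ne' hj.1, hj1.lt_of_ne hj.2⟩
  obtain ⟨k, hkj, hk⟩ := exists_ne_mem_Ioo hq.1 hj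
  set ε := min (min (q j) (1 - q j)) (min (q k) (1 - q k))
  have hε : 0 < ε := by
    simp only [ε, lt_min_iff, sub_pos]
    exact ⟨hj, hk⟩
  have hεj : ε ≤ q j ∧ ε ≤ 1 - q j := ⟨by simp [ε], by simp [ε]⟩
  have hεk : ε ≤ q k ∧ ε ≤ 1 - q k := ⟨by simp [ε], by simp [ε]⟩
  have hzero := eq_zero_of_add_mem_of_sub_mem_of_mem_extremePoints hq
    (add_single_sub_single_mem hq.1 hkj.symm (ε := ε) ⟨by linarith, by linarith⟩
      ⟨by linarith, by linarith⟩)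
    (by
      rw [show q - (Pi.single j ε - Pi.single k ε) = q + (Pi.single k ε - Pi.single j ε) by abel]
      exact add_single_sub_single_mem hq.1 hkj ⟨by linarith, by linarith⟩
        ⟨by linarith, by linarith⟩)
  have : ε = 0 := by simpa [hkj.symm] using congrFun hzero j
  exact hε.ne' this

lemma extremePoints_subset_image_indicator :
    (hypersimplex ι p).extremePoints ℝ ⊆
      (fun S : Finset ι => (S : Set ι).indicator (1 : ι → ℝ)) '' {S | #S = p} := by
  classical
  intro q hq
  have h01 := eq_zero_or_eq_one_of_mem_extremePoints hq
  have hind : (({j | q j = 1} : Finset ι) : Set ι).indicator 1 = q := by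
    ext j
    rcases h01 j with h | h <;> simp [h]
  refine ⟨({j | q j = 1} : Finset ι), ?_, hind⟩
  have hsum := hq.1.2
  rw [← hind] at hsum
  simpa [Set.indicator_apply] using hsum

end hypersimplex

variable {p : ℕ}

lemma convex_setOf_isFixedSizeDesign : Convex ℝ {μ : Finset ι → ℝ | IsFixedSizeDesign p μ} := by
  intro μ hμ ν hν a b ha hb hab
  refine ⟨fun S => ?_, ?_, fun S hS => ?_⟩
  · exact add_nonneg (mul_nonneg ha (hμ.nonneg S)) (mul_nonneg hb (hν.nonneg S))
  · simp [sum_add_distrib, ← mul_sum, hμ.sum_eq_one, hν.sum_eq_one, hab]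
  · by_cases hμS : μ S = 0
    · exact hν.card_eq S fun hνS => hS (by simp [hμS, hνS])
    · exact hμ.card_eq S hμS

variable [DecidableEq ι]

lemma isFixedSizeDesign_single {S : Finset ι} (hS : #S = p) :
    IsFixedSizeDesign p (Pi.single S 1) := by
  refine ⟨fun T => ?_, by simp, fun T hT => ?_⟩
  · by_cases h : T = S <;> simp [h]
  · by_cases h : T = S
    · rwa [h]
    · simp [h] at hT

lemma inclusionProb_single (S : Finset ι) :
    inclusionProb (Pi.single S (1 : ℝ)) = (S : Set ι).indicator 1 := by
  ext j
  change (∑ T, if j ∈ T then Pi.single S (1 : ℝ) T else 0) = _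
  simp only [Pi.single_apply, Set.indicator_apply]
  rw [sum_eq_single S (fun T _ hT => by simp [hT]) (by simp)]
  simp

theorem hypersimplex_subset_image_inclusionProb :
    hypersimplex ι p ⊆ inclusionProb '' {μ | IsFixedSizeDesign p μ} := by
  set V := (fun S : Finset ι => (S : Set ι).indicator (1 : ι → ℝ)) '' {S | #S = p}
  have hV : V ⊆ inclusionProb '' {μ | IsFixedSizeDesign p μ} := by
    rintro _ ⟨S, hS, rfl⟩
    exact ⟨_, isFixedSizeDesign_single hS, inclusionProb_single S⟩
  calc hypersimplex ι p
      = closure (convexHull ℝ ((hypersimplex ι p).extremePoints ℝ)) :=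
        (closure_convexHull_extremePoints hypersimplex.isCompact hypersimplex.convex).symm
    _ ⊆ closure (convexHull ℝ V) :=
        closure_mono (convexHull_mono hypersimplex.extremePoints_subset_image_indicator)
    _ = convexHull ℝ V := (V.toFinite.isClosed_convexHull ℝ).closure_eq
    _ ⊆ _ := convexHull_min hV (convex_setOf_isFixedSizeDesign.linear_image _)

/-- proportional sampling: there is a distribution over p-element subsets
of {1,...,n} under which index j is included with probability exactly q_j. -/
theorem stmt13 (n p : ℕ) (q : Fin n → ℝ) (h0 : ∀ j, 0 ≤ q j) (h1 : ∀ j, q j ≤ 1)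
    (hsum : ∑ j, q j = p) :
    ∃ μ : Finset (Fin n) → ℝ,
      (∀ S, 0 ≤ μ S) ∧
      (∑ S : Finset (Fin n), μ S = 1) ∧
      (∀ S, μ S ≠ 0 → S.card = p) ∧
      ∀ j, (∑ S : Finset (Fin n), if j ∈ S then μ S else 0) = q j := by
  obtain ⟨μ, hμ, hμq⟩ := hypersimplex_subset_image_inclusionProb ⟨fun j _ => ⟨h0 j, h1 j⟩, hsum⟩
  exact ⟨μ, hμ.nonneg, hμ.sum_eq_one, hμ.card_eq, congrFun hμq⟩
end
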